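/- arXiv:0903.3767 — 4 statements merged into one kernel-verified Lean document; each statement's English description precedes it below -/
import Mathlib

section
/- For every positive integer n, ∑_{k=0}^{2n} (-1)^k * C(2n,k)^3 = (-1)^n * C(2n,n) * C(3n,n). -/
open Finset

/-- WZ certificate polynomial for Dixon's identity (specialized). -/
def Qp (N K : ℤ) : ℤ :=
    K^3*(-116 - 784*N - 2084*N^2 - 2728*N^3 - 1760*N^4 - 448*N^5)
  + K^4*(207 + 1113*N + 2214*N^2 + 1932*N^3 + 624*N^4)
  + K^5*(-147 - 594*N - 792*N^2 - 348*N^3)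
  + K^6*(48 + 132*N + 90*N^2)
  + K^7*(-6 - 9*N)

lemma I3 (m k : ℕ) :
    ((m:ℤ)+1) * (m.choose k : ℤ) = ((m:ℤ)+1-k) * ((m+1).choose k : ℤ) := by
  rcases le_or_gt k (m+1) with h | h
  · have := Nat.choose_mul_succ_eq m k
    zify [h] at this
    linarith
  · have h1 : m.choose k = 0 := Nat.choose_eq_zero_of_lt (by omega)
    have h2 : (m+1).choose k = 0 := Nat.choose_eq_zero_of_lt (by omega)
    simp [h1, h2]

lemma I2 (m k : ℕ) :
    ((k:ℤ)+1) * (m.choose (k+1) : ℤ) = ((m:ℤ)-k) * (m.choose k : ℤ) := by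
  rcases le_or_gt k m with h | h
  · have := Nat.choose_succ_right_eq m k
    zify [h] at this
    linarith
  · have h1 : m.choose k = 0 := Nat.choose_eq_zero_of_lt (by omega)
    have h2 : m.choose (k+1) = 0 := Nat.choose_eq_zero_of_lt (by omega)
    simp [h1, h2]

lemma star (n k : ℕ) :
    2*((n:ℤ)+1)^2*((2*(n:ℤ)+1)*(2*(n:ℤ)+2))^3*(-1)^k*(((2*n+2).choose k : ℤ))^3
      + 6*(3*(n:ℤ)+1)*(3*(n:ℤ)+2)*((2*(n:ℤ)+1)*(2*(n:ℤ)+2))^3*(-1)^k*(((2*n).choose k : ℤ))^3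
    = (-1)^(k+1) * Qp n (k+1) * (((2*n+2).choose (k+1) : ℤ))^3
      - (-1)^k * Qp n k * (((2*n+2).choose k : ℤ))^3 := by
  have h1 : (2*(n:ℤ)+1)*(2*(n:ℤ)+2)*((2*n).choose k : ℤ)
      = (2*(n:ℤ)+1-k)*(2*(n:ℤ)+2-k)*((2*n+2).choose k : ℤ) := by
    have a1 := I3 (2*n) k
    have a2 := I3 (2*n+1) k
    push_cast at a1 a2 ⊢
    have e : (2*n+1+1) = (2*n+2) := by ring
    rw [e] at a2
    linear_combination (2*(n:ℤ)+2) * a1 + (2*(n:ℤ)+1-k) * a2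
  have h2 : ((k:ℤ)+1) * ((2*n+2).choose (k+1) : ℤ)
      = (2*(n:ℤ)+2-k) * ((2*n+2).choose k : ℤ) := by
    have := I2 (2*n+2) k
    push_cast at this ⊢
    linarith
  have h1c := congrArg (fun z : ℤ => z^3) h1
  have h2c := congrArg (fun z : ℤ => z^3) h2
  have hk : ((k:ℤ)+1)^3 ≠ 0 := by positivity
  apply mul_left_cancel₀ hk
  simp only [Qp]
  linear_combination (6*(3*(n:ℤ)+1)*(3*(n:ℤ)+2)*(-1:ℤ)^k*((k:ℤ)+1)^3) * h1c
    + ((-1:ℤ)^k *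
        (((k:ℤ)+1)^3*(-116 - 784*(n:ℤ) - 2084*(n:ℤ)^2 - 2728*(n:ℤ)^3 - 1760*(n:ℤ)^4 - 448*(n:ℤ)^5)
         + ((k:ℤ)+1)^4*(207 + 1113*(n:ℤ) + 2214*(n:ℤ)^2 + 1932*(n:ℤ)^3 + 624*(n:ℤ)^4)
         + ((k:ℤ)+1)^5*(-147 - 594*(n:ℤ) - 792*(n:ℤ)^2 - 348*(n:ℤ)^3)
         + ((k:ℤ)+1)^6*(48 + 132*(n:ℤ) + 90*(n:ℤ)^2)
         + ((k:ℤ)+1)^7*(-6 - 9*(n:ℤ)))) * h2c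

lemma rec_S (n : ℕ) :
    ((n:ℤ)+1)^2 * ∑ k ∈ Finset.range (2*(n+1)+1), (-1:ℤ)^k * ((2*(n+1)).choose k : ℤ)^3
    = -3*(3*(n:ℤ)+1)*(3*(n:ℤ)+2)
        * ∑ k ∈ Finset.range (2*n+1), (-1:ℤ)^k * ((2*n).choose k : ℤ)^3 := by
  have e1 : 2*(n+1) = 2*n+2 := by ring
  have e2 : 2*(n+1)+1 = 2*n+3 := by ring
  rw [e2, e1]
  set g : ℕ → ℤ := fun k => (-1)^k * Qp n k * (((2*n+2).choose k : ℤ))^3 with hg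
  have hsum : ∑ k ∈ Finset.range (2*n+3),
      (2*((n:ℤ)+1)^2*((2*(n:ℤ)+1)*(2*(n:ℤ)+2))^3*(-1)^k*(((2*n+2).choose k : ℤ))^3
        + 6*(3*(n:ℤ)+1)*(3*(n:ℤ)+2)*((2*(n:ℤ)+1)*(2*(n:ℤ)+2))^3*(-1)^k*(((2*n).choose k : ℤ))^3)
      = g (2*n+3) - g 0 := by
    rw [← Finset.sum_range_sub g]
    exact Finset.sum_congr rfl fun k _ => star n k
  have hg0 : g 0 = 0 := by simp [hg, Qp]
  have hgtop : g (2*n+3) = 0 := by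
    have : (2*n+2).choose (2*n+3) = 0 := Nat.choose_eq_zero_of_lt (by omega)
    simp [hg, this]
  rw [hg0, hgtop, sub_zero] at hsum
  rw [Finset.sum_add_distrib] at hsum
  have hA : ∑ k ∈ Finset.range (2*n+3),
      2*((n:ℤ)+1)^2*((2*(n:ℤ)+1)*(2*(n:ℤ)+2))^3*(-1)^k*(((2*n+2).choose k : ℤ))^3
    = 2*((n:ℤ)+1)^2*((2*(n:ℤ)+1)*(2*(n:ℤ)+2))^3
        * ∑ k ∈ Finset.range (2*n+3), (-1:ℤ)^k * (((2*n+2).choose k : ℤ))^3 := by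
    rw [Finset.mul_sum]; exact Finset.sum_congr rfl fun k _ => by ring
  have hB : ∑ k ∈ Finset.range (2*n+3),
      6*(3*(n:ℤ)+1)*(3*(n:ℤ)+2)*((2*(n:ℤ)+1)*(2*(n:ℤ)+2))^3*(-1)^k*(((2*n).choose k : ℤ))^3
    = 6*(3*(n:ℤ)+1)*(3*(n:ℤ)+2)*((2*(n:ℤ)+1)*(2*(n:ℤ)+2))^3
        * ∑ k ∈ Finset.range (2*n+1), (-1:ℤ)^k * (((2*n).choose k : ℤ))^3 := by
    rw [Finset.mul_sum]
    have z1 : (2*n).choose (2*n+1) = 0 := Nat.choose_eq_zero_of_lt (by omega)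
    have z2 : (2*n).choose (2*n+2) = 0 := Nat.choose_eq_zero_of_lt (by omega)
    rw [show 2*n+3 = (2*n+2)+1 from rfl, Finset.sum_range_succ,
        show 2*n+2 = (2*n+1)+1 from rfl, Finset.sum_range_succ, z1, z2]
    norm_num
    exact Finset.sum_congr rfl fun k _ => by ring
  rw [hA, hB] at hsum
  have hM : (2*((2*(n:ℤ)+1)*(2*(n:ℤ)+2))^3) ≠ 0 := by positivity
  apply mul_left_cancel₀ hM
  linear_combination hsum

lemma rec_T_nat (n : ℕ) :
    (n+1)^2 * ((2*n+2).choose (n+1)) * ((3*n+3).choose (n+1))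
      = 3*(3*n+1)*(3*n+2) * ((2*n).choose n) * ((3*n).choose n) := by
  apply Nat.cast_injective (R := ℚ)
  push_cast
  rw [Nat.cast_choose ℚ (show n+1 ≤ 2*n+2 by omega),
      Nat.cast_choose ℚ (show n+1 ≤ 3*n+3 by omega),
      Nat.cast_choose ℚ (show n ≤ 2*n by omega),
      Nat.cast_choose ℚ (show n ≤ 3*n by omega)]
  have e1 : 2*n+2 - (n+1) = n+1 := by omega
  have e2 : 3*n+3 - (n+1) = 2*n+2 := by omega
  have e3 : 2*n - n = n := by omega
  have e4 : 3*n - n = 2*n := by omega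
  rw [e1, e2, e3, e4]
  have f1 : Nat.factorial (2*n+2) = (2*n+2) * ((2*n+1) * Nat.factorial (2*n)) := by
    rw [show 2*n+2 = (2*n+1)+1 from rfl, Nat.factorial_succ,
        show 2*n+1 = (2*n)+1 from rfl, Nat.factorial_succ]
  have f2 : Nat.factorial (3*n+3) = (3*n+3) * ((3*n+2) * ((3*n+1) * Nat.factorial (3*n))) := by
    rw [show 3*n+3 = (3*n+2)+1 from rfl, Nat.factorial_succ,
        show 3*n+2 = (3*n+1)+1 from rfl, Nat.factorial_succ,
        show 3*n+1 = (3*n)+1 from rfl, Nat.factorial_succ]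
  have f3 : Nat.factorial (n+1) = (n+1) * Nat.factorial n := Nat.factorial_succ n
  rw [f1, f2, f3]
  have h1 : (Nat.factorial n : ℚ) ≠ 0 := by exact_mod_cast Nat.factorial_ne_zero n
  have h2 : (Nat.factorial (2*n) : ℚ) ≠ 0 := by exact_mod_cast Nat.factorial_ne_zero (2*n)
  have h3 : (Nat.factorial (3*n) : ℚ) ≠ 0 := by exact_mod_cast Nat.factorial_ne_zero (3*n)
  have h4 : ((n:ℚ)+1) ≠ 0 := by positivity
  push_cast
  field_simp

theorem stmt1 (n : ℕ) (hn : 0 < n) :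
    ∑ k ∈ Finset.range (2 * n + 1), (-1 : ℤ) ^ k * ((2 * n).choose k : ℤ) ^ 3 =
      (-1 : ℤ) ^ n * ((2 * n).choose n : ℤ) * ((3 * n).choose n : ℤ) := by
  clear hn
  induction n with
  | zero => simp
  | succ n ih =>
    have hS := rec_S n
    have hT : ((n:ℤ)+1)^2 * ((2*n+2).choose (n+1) : ℤ) * ((3*n+3).choose (n+1) : ℤ)
        = 3*(3*(n:ℤ)+1)*(3*(n:ℤ)+2) * ((2*n).choose n : ℤ) * ((3*n).choose n : ℤ) := by
      exact_mod_cast congrArg (Nat.cast : ℕ → ℤ) (rec_T_nat n)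
    have e1 : 2*(n+1) = 2*n+2 := by ring
    have e2 : 3*(n+1) = 3*n+3 := by ring
    rw [e1, e2]
    rw [e1] at hS
    have hk : ((n:ℤ)+1)^2 ≠ 0 := by positivity
    apply mul_left_cancel₀ hk
    rw [hS, ih]
    push_cast
    linear_combination ((-1:ℤ)^n) * hT
end

section
/- For all positive integers n and r, the central binomial coefficient C(2n,n) divides ∑_{k=0}^{2n} (-1)^k * C(2n,k)^r. -/
open Finset

namespace CalkinAux

open Polynomial

/-- additive reindex of a sum over `range (A*d)` as a double sum. -/
lemma sum_range_mul' {M : Type*} [AddCommMonoid M] (f : ℕ → M) (A d : ℕ) :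
    ∑ i ∈ range (A * d), f i = ∑ j ∈ range A, ∑ i ∈ range d, f (j * d + i) := by
  induction A with
  | zero => simp
  | succ A ih =>
      rw [Nat.succ_mul, Finset.sum_range_add, ih, Finset.sum_range_succ]

/-- multiplicative version. -/
lemma prod_range_mul' {M : Type*} [CommMonoid M] (f : ℕ → M) (A d : ℕ) :
    ∏ i ∈ range (A * d), f i = ∏ j ∈ range A, ∏ i ∈ range d, f (j * d + i) := by
  induction A with
  | zero => simp
  | succ A ih =>
      rw [Nat.succ_mul, Finset.prod_range_add, ih, Finset.prod_range_succ]

lemma choose_two_add (a b : ℕ) : (a + b).choose 2 = a.choose 2 + b.choose 2 + a * b := by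
  induction b with
  | zero => simp
  | succ b ih =>
      have h1 : a + (b+1) = (a+b) + 1 := by ring
      rw [h1]
      have h2 : ((a+b)+1).choose 2 = (a+b).choose 2 + (a+b) := by
        rw [Nat.choose_succ_succ ( a+b) 1, Nat.choose_one_right]
        ring
      have h3 : (b+1).choose 2 = b.choose 2 + b := by
        rw [Nat.choose_succ_succ b 1, Nat.choose_one_right]
        ring
      rw [h2, ih, h3]
      ring

lemma dvd_choose_two_mul_of_odd {d : ℕ} (hd : Odd d) (u : ℕ) : d ∣ (u * d).choose 2 := by
  have h2 : 2 ∣ u * (u * d - 1) := by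
    rcases Nat.even_or_odd u with hu | hu
    · exact Dvd.dvd.mul_right hu.two_dvd _
    · have : Odd (u * d) := hu.mul hd
      rcases this with ⟨c, hc⟩
      have : u * d - 1 = 2 * c := by omega
      rw [this]
      exact Dvd.dvd.mul_left ⟨c, by ring⟩ u
  have key : (u * d) * (u * d - 1) = d * (u * (u * d - 1)) := by
    ring_nf
  rw [Nat.choose_two_right, key, Nat.mul_div_assoc d h2]
  exact Dvd.intro _ rfl

lemma choose_two_mul_of_even {d : ℕ} (hd : Even d) (u : ℕ) :
    (u * d).choose 2 = (d / 2) * (u * (u * d - 1)) := by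
  obtain ⟨c, hc⟩ := hd
  have hd2 : d = 2 * c := by omega
  subst hd2
  have hkey : (u * (2 * c)) * (u * (2 * c) - 1) = 2 * (c * (u * (u * (2*c) - 1))) := by
    ring_nf
  rw [Nat.choose_two_right, hkey, Nat.mul_div_cancel_left _ (by norm_num)]
  have h5 : 2 * c / 2 = c := by omega
  rw [h5]

/-- alternating sum of (equal) binomial powers over odd top vanishes -/
lemma alt_sum_choose_pow {A r : ℕ} (hA : Odd A) :
    ∑ u ∈ range (A + 1), (-1 : ℂ) ^ u * ((A.choose u : ℂ)) ^ r = 0 := by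
  set f : ℕ → ℂ := fun u => (-1 : ℂ) ^ u * ((A.choose u : ℂ)) ^ r with hf
  have hrefl := Finset.sum_range_reflect f (A + 1)
  have hS : ∑ u ∈ range (A+1), f u = ∑ u ∈ range (A+1), -(f u) := by
    conv_lhs => rw [← hrefl]
    refine Finset.sum_congr rfl fun j hj => ?_
    simp only [Finset.mem_range] at hj
    have hjA : j ≤ A := by omega
    have h1 : A + 1 - 1 - j = A - j := by omega
    rw [h1, hf]
    simp only
    rw [Nat.choose_symm hjA]
    have hsign : (-1 : ℂ) ^ (A - j) = -(-1 : ℂ) ^ j := by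
      rcases Nat.even_or_odd j with hj2 | hj2
      · have : Odd (A - j) := by
          rcases hA with ⟨a, ha⟩; rcases hj2 with ⟨b, hb⟩
          exact ⟨a - b, by omega⟩
        rw [this.neg_one_pow, hj2.neg_one_pow]
      · have : Even (A - j) := by
          rcases hA with ⟨a, ha⟩; rcases hj2 with ⟨b, hb⟩
          exact ⟨a - b, by omega⟩
        rw [this.neg_one_pow, hj2.neg_one_pow]
        simp
    rw [hsign]
    ring
  have h2S : (∑ u ∈ range (A+1), f u) + ∑ u ∈ range (A+1), f u = 0 := by
    nth_rewrite 1 [hS]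
    rw [Finset.sum_neg_distrib]
    ring
  exact add_self_eq_zero.mp h2S

lemma neg_one_pow_eq_of_mod_two {K : Type*} [Monoid K] [HasDistribNeg K] {a b : ℕ}
    (h : a % 2 = b % 2) : (-1 : K) ^ a = (-1) ^ b := by
  conv_lhs => rw [← Nat.div_add_mod a 2, pow_add, pow_mul, neg_one_sq, one_pow, one_mul]
  conv_rhs => rw [← Nat.div_add_mod b 2, pow_add, pow_mul, neg_one_sq, one_pow, one_mul]
  rw [h]

noncomputable def Pz (m : ℕ) : Polynomial (Polynomial ℤ) :=
  ∏ i ∈ range m, (X + C ((X : Polynomial ℤ) ^ i))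

noncomputable def Bq (m r ε : ℕ) : Polynomial ℤ :=
  ∑ k ∈ range (m + 1), C ((-1 : ℤ) ^ k) * X ^ (ε * k.choose 2) * ((Pz m).coeff k) ^ r

lemma Bq_eval_one (m r ε : ℕ) :
    (Bq m r ε).eval 1 = ∑ k ∈ range (m + 1), (-1 : ℤ) ^ k * ((m.choose k : ℤ)) ^ r := by
  have hco : ∀ k, ((Pz m).coeff k).eval 1 = (m.choose k : ℤ) := by
    intro k
    have h1 : ((Pz m).map (evalRingHom (1 : ℤ))).coeff k = (evalRingHom (1:ℤ)) ((Pz m).coeff k) :=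
      Polynomial.coeff_map _ _
    have h2 : (Pz m).map (evalRingHom (1 : ℤ)) = (X + 1) ^ m := by
      unfold Pz
      rw [Polynomial.map_prod]
      have h3 : ∀ i ∈ range m,
          (X + C ((X : Polynomial ℤ) ^ i)).map (evalRingHom (1 : ℤ)) = X + 1 := by
        intro i _
        rw [Polynomial.map_add, Polynomial.map_X, Polynomial.map_C]
        simp
      rw [Finset.prod_congr rfl h3, Finset.prod_const, Finset.card_range]
    have h4 : (evalRingHom (1:ℤ)) ((Pz m).coeff k) = ((Pz m).coeff k).eval 1 := rfl
    rw [← h4, ← h1, h2, Polynomial.coeff_X_add_one_pow]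
  unfold Bq
  rw [Polynomial.eval_finset_sum]
  refine Finset.sum_congr rfl fun k _ => ?_
  rw [Polynomial.eval_mul, Polynomial.eval_mul, Polynomial.eval_C, Polynomial.eval_pow,
    Polynomial.eval_pow, Polynomial.eval_X, one_pow, mul_one, hco]

lemma Bq_aeval_eq_zero {m r ε d : ℕ} (hr : 0 < r) (hd : 0 < d) (hodd : Odd (m / d))
    (hpar : Odd (r + ε)) {ζ : ℂ} (hζ : IsPrimitiveRoot ζ d) :
    Polynomial.aeval ζ (Bq m r ε) = 0 := by
  set A := m / d with hA
  set ρ := m % d with hρdef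
  have hρd : ρ < d := Nat.mod_lt _ hd
  have hm : A * d + ρ = m := Nat.div_add_mod' m d
  have hAd : (A + 1) * d = A * d + d := by ring
  have hζd : ∀ j i : ℕ, ζ ^ (j * d + i) = ζ ^ i := by
    intro j i
    rw [pow_add, mul_comm j d, pow_mul, hζ.pow_eq_one, one_pow, one_mul]
  set P : Polynomial ℂ := ∏ i ∈ range m, (X + C (ζ ^ i)) with hP
  set R : Polynomial ℂ := ∏ i ∈ range ρ, (X + C (ζ ^ i)) with hR
  obtain ⟨σ, hσ⟩ : ∃ s : ℂ, s = (-1) ^ (d + 1) := ⟨_, rfl⟩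
  have hcoeff_aeval : ∀ k, Polynomial.aeval ζ ((Pz m).coeff k) = P.coeff k := by
    intro k
    have h1 : ((Pz m).map (Polynomial.aeval ζ).toRingHom).coeff k
        = (Polynomial.aeval ζ).toRingHom ((Pz m).coeff k) := Polynomial.coeff_map _ _
    have h2 : (Pz m).map (Polynomial.aeval ζ).toRingHom = P := by
      unfold Pz
      rw [hP, Polynomial.map_prod]
      refine Finset.prod_congr rfl fun i _ => ?_
      rw [Polynomial.map_add, Polynomial.map_X, Polynomial.map_C]
      congr 1
      show C ((Polynomial.aeval ζ) ((X : Polynomial ℤ) ^ i)) = C (ζ ^ i)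
      rw [Polynomial.aeval_X_pow]
    rw [show Polynomial.aeval ζ ((Pz m).coeff k)
        = (Polynomial.aeval ζ).toRingHom ((Pz m).coeff k) from rfl, ← h1, h2]
  have hQ : ∏ i ∈ range d, ((X : Polynomial ℂ) + C (ζ ^ i)) = X ^ d - C ((-1 : ℂ) ^ d) := by
    have he : ((-1 : ℂ)) ^ d = (-1 : ℂ) ^ d := rfl
    rw [X_pow_sub_C_eq_prod hζ hd he]
    refine Finset.prod_congr rfl fun i _ => ?_
    rw [mul_neg_one, map_neg, sub_neg_eq_add]
  have hσC : (X : Polynomial ℂ) ^ d - C ((-1 : ℂ) ^ d) = X ^ d + C σ := by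
    rw [hσ, pow_succ, map_mul]
    simp only [map_neg, map_one, mul_neg, mul_one]
    ring
  have hPfac : P = (X ^ d + C σ) ^ A * R := by
    rw [hP, hR, ← hm, Finset.prod_range_add, prod_range_mul']
    congr 1
    · rw [Finset.prod_congr rfl (fun j (_ : j ∈ range A) =>
        Finset.prod_congr rfl (fun i (_ : i ∈ range d) => by rw [hζd j i])),
        Finset.prod_congr rfl (fun j (_ : j ∈ range A) => hQ), Finset.prod_const,
        Finset.card_range, hσC]
    · refine Finset.prod_congr rfl fun i _ => ?_
      rw [hζd A i]
  have hRdeg : ∀ j, ρ < j → R.coeff j = 0 := by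
    intro j hj
    apply Polynomial.coeff_eq_zero_of_natDegree_lt
    calc R.natDegree ≤ ∑ i ∈ range ρ, ((X : Polynomial ℂ) + C (ζ ^ i)).natDegree :=
          Polynomial.natDegree_prod_le _ _
      _ ≤ ∑ _i ∈ range ρ, 1 :=
          Finset.sum_le_sum (fun i _ => by rw [Polynomial.natDegree_X_add_C])
      _ = ρ := by simp
      _ < j := hj
  have hG : ((X : Polynomial ℂ) ^ d + C σ) ^ A
      = ∑ u ∈ range (A + 1), C (σ ^ (A - u) * (A.choose u : ℂ)) * X ^ (d * u) := by
    rw [add_pow]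
    refine Finset.sum_congr rfl fun u hu => ?_
    rw [← pow_mul, Polynomial.C_mul, Polynomial.C_pow, Polynomial.C_eq_natCast]
    ring
  have hco : ∀ k, k < (A + 1) * d →
      P.coeff k = σ ^ (A - k / d) * (A.choose (k / d) : ℂ) * R.coeff (k % d) := by
    intro k hk
    rw [hPfac, hG, Finset.sum_mul, Polynomial.finset_sum_coeff]
    have hterm : ∀ u ∈ range (A + 1),
        (C (σ ^ (A - u) * (A.choose u : ℂ)) * X ^ (d * u) * R).coeff k
        = σ ^ (A - u) * (A.choose u : ℂ) * (if d * u ≤ k then R.coeff (k - d * u) else 0) := by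
      intro u _
      rw [mul_right_comm, Polynomial.coeff_mul_X_pow']
      simp only [Polynomial.coeff_C_mul]
      split_ifs <;> simp
    rw [Finset.sum_congr rfl hterm]
    have hmem : k / d ∈ range (A + 1) := by
      rw [Finset.mem_range]
      exact (Nat.div_lt_iff_lt_mul hd).mpr hk
    rw [Finset.sum_eq_single_of_mem (k / d) hmem]
    · have h1 : d * (k / d) ≤ k := by
        rw [mul_comm]; exact Nat.div_mul_le_self k d
      have he : k - d * (k / d) = k % d := by
        have := Nat.div_add_mod k d
        omega
      rw [if_pos h1, he]
    · intro u hu hne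
      rw [Finset.mem_range] at hu
      rcases Nat.lt_or_ge u (k / d) with hlt | hge
      · have h2 : d * (u + 1) ≤ d * (k / d) := Nat.mul_le_mul_left d hlt
        have h3 := Nat.div_add_mod k d
        have h1 : d * u ≤ k := by
          have h4 : d * (u + 1) = d * u + d := by ring
          omega
        have h5 : ρ < k - d * u := by
          have h4 : d * (u + 1) = d * u + d := by ring
          omega
        rw [if_pos h1, hRdeg _ h5, mul_zero]
      · have hgt : k / d < u := lt_of_le_of_ne hge (fun h => hne h.symm)
        have h1 : ¬ d * u ≤ k := by
          intro hcon
          have h6 : u * d ≤ k := by rw [mul_comm]; exact hcon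
          have h7 : u ≤ k / d := (Nat.le_div_iff_mul_le hd).mpr h6
          omega
        rw [if_neg h1, mul_zero]
  have haevalB : Polynomial.aeval ζ (Bq m r ε)
      = ∑ k ∈ range (m + 1), (-1 : ℂ) ^ k * ζ ^ (ε * k.choose 2) * (P.coeff k) ^ r := by
    unfold Bq
    rw [map_sum]
    refine Finset.sum_congr rfl fun k _ => ?_
    simp only [map_mul, map_pow, map_neg, map_one, Polynomial.aeval_C, Polynomial.aeval_X,
      hcoeff_aeval, eq_intCast]
  have hPdeg : ∀ k, m < k → P.coeff k = 0 := by
    intro k hk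
    apply Polynomial.coeff_eq_zero_of_natDegree_lt
    calc P.natDegree ≤ ∑ i ∈ range m, ((X : Polynomial ℂ) + C (ζ ^ i)).natDegree := by
          rw [hP]; exact Polynomial.natDegree_prod_le _ _
      _ ≤ ∑ _i ∈ range m, 1 :=
          Finset.sum_le_sum (fun i _ => by rw [Polynomial.natDegree_X_add_C])
      _ = m := by simp
      _ < k := hk
  have hext : (∑ k ∈ range (m + 1), (-1 : ℂ) ^ k * ζ ^ (ε * k.choose 2) * (P.coeff k) ^ r)
      = ∑ k ∈ range ((A + 1) * d), (-1 : ℂ) ^ k * ζ ^ (ε * k.choose 2) * (P.coeff k) ^ r := by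
    apply Finset.sum_subset
    · rw [Finset.range_subset_range]
      omega
    · intro k hk1 hk2
      rw [Finset.mem_range] at hk1 hk2
      have hmk : m < k := by omega
      rw [hPdeg k hmk, zero_pow hr.ne', mul_zero]
  have hphase : ∀ u : ℕ, u ≤ A →
      (-1 : ℂ) ^ (u * d) * ζ ^ (ε * (u * d).choose 2) * σ ^ (r * (A - u))
      = (-1 : ℂ) ^ u * σ ^ (r * A) := by
    intro u huA
    rcases Nat.even_or_odd d with hdeven | hdodd
    · have hd2 : 2 ≤ d := by
        rcases hdeven with ⟨c, hc⟩; omega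
      have hζhalf : ζ ^ (d / 2) = -1 := by
        have h2 : (ζ ^ (d / 2) - 1) * (ζ ^ (d / 2) + 1) = 0 := by
          have h3 : (ζ ^ (d / 2)) ^ 2 = 1 := by
            rw [← pow_mul]
            have h4 : d / 2 * 2 = d := by rcases hdeven with ⟨c, hc⟩; omega
            rw [h4, hζ.pow_eq_one]
          linear_combination h3
        rcases mul_eq_zero.mp h2 with h | h
        · exact absurd (by linear_combination h)
            (hζ.pow_ne_one_of_pos_of_lt (by omega) (by omega))
        · linear_combination h
      have hσneg : σ = -1 := by
        rw [hσ]
        exact (Even.add_one hdeven).neg_one_pow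
      have hud : Even (u * d) := hdeven.mul_left u
      have hchz : ζ ^ (ε * (u * d).choose 2) = ((-1 : ℂ) ^ u) ^ ε := by
        rw [choose_two_mul_of_even hdeven u]
        have h1 : ε * (d / 2 * (u * (u * d - 1))) = d / 2 * (ε * (u * (u * d - 1))) := by ring
        rw [h1, pow_mul, hζhalf]
        have h2 : (ε * (u * (u * d - 1))) % 2 = (u * ε) % 2 := by
          rcases Nat.even_or_odd u with hue | huo
          · rcases hue with ⟨c, hc⟩
            have ha : ε * (u * (u * d - 1)) = 2 * (ε * c * (u * d - 1)) := by subst hc; ring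
            have hb : u * ε = 2 * (c * ε) := by subst hc; ring
            omega
          · have hud1 : Odd (u * d - 1) := by
              have h5 : 1 ≤ u * d := by
                rcases huo with ⟨c, hc⟩
                have h6 : 1 ≤ u := by omega
                calc 1 = 1 * 1 := by ring
                  _ ≤ u * d := Nat.mul_le_mul h6 hd
              rcases hud with ⟨c, hc⟩
              exact ⟨c - 1, by omega⟩
            rcases huo with ⟨a, ha⟩
            rcases hud1 with ⟨b, hb⟩
            have hx : ε * (u * (u * d - 1)) = ε * ((2 * a + 1) * (2 * b + 1)) := by
              rw [← ha, ← hb]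
            have h6 : ε * ((2 * a + 1) * (2 * b + 1)) = 2 * (ε * (2 * a * b + a + b)) + ε := by
              ring
            have h7 : u * ε = 2 * (a * ε) + ε := by subst ha; ring
            omega
        rw [neg_one_pow_eq_of_mod_two h2, pow_mul]
      have hudeven : (-1 : ℂ) ^ (u * d) = 1 := hud.neg_one_pow
      rw [hudeven, one_mul, hchz, hσneg]
      rw [← pow_mul, ← pow_add, ← pow_add]
      apply neg_one_pow_eq_of_mod_two
      rcases Nat.even_or_odd r with hre | hro
      · have hεodd : Odd ε := by
          rcases hpar with ⟨c, hc⟩; rcases hre with ⟨b, hb⟩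
          exact ⟨c - b, by omega⟩
        rcases hre with ⟨b, hb⟩
        rcases hεodd with ⟨c, hc⟩
        have e1 : u * ε + r * (A - u) = u + 2 * (u * c + b * (A - u)) := by
          subst hb; subst hc; ring
        have e2 : u + r * A = u + 2 * (b * A) := by subst hb; ring
        omega
      · have hεeven : Even ε := by
          rcases hpar with ⟨c, hc⟩; rcases hro with ⟨b, hb⟩
          exact ⟨c - b, by omega⟩
        rcases hro with ⟨b, hb⟩
        rcases hεeven with ⟨c, hc⟩
        have e1 : u * ε + r * (A - u) = (A - u) + 2 * (u * c + b * (A - u)) := by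
          subst hb; subst hc; ring
        have e2 : u + r * A = u + A + 2 * (b * A) := by subst hb; ring
        omega
    · have hσ1 : σ = 1 := by
        rw [hσ]
        exact (Odd.add_one hdodd).neg_one_pow
      have hch1 : ζ ^ (ε * (u * d).choose 2) = 1 := by
        obtain ⟨t, ht⟩ := dvd_choose_two_mul_of_odd hdodd u
        rw [ht]
        have h1 : ε * (d * t) = d * (ε * t) := by ring
        rw [h1, pow_mul, hζ.pow_eq_one, one_pow]
      have hudpar : (-1 : ℂ) ^ (u * d) = (-1) ^ u := by
        apply neg_one_pow_eq_of_mod_two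
        rcases Nat.even_or_odd u with hue | huo
        · rcases hue with ⟨c, hc⟩
          have hx : u * d = 2 * (c * d) := by subst hc; ring
          omega
        · rcases huo with ⟨c, hc⟩
          rcases hdodd with ⟨e, he⟩
          have hx : u * d = 2 * (2 * c * e + c + e) + 1 := by subst hc; subst he; ring
          omega
      rw [hσ1, one_pow, one_pow, mul_one, hch1, mul_one, hudpar, mul_one]
  rw [haevalB, hext, sum_range_mul' _ (A + 1) d]
  have hkey : ∀ u ∈ range (A + 1), ∀ v ∈ range d,
      (-1 : ℂ) ^ (u * d + v) * ζ ^ (ε * (u * d + v).choose 2) * (P.coeff (u * d + v)) ^ r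
      = ((-1 : ℂ) ^ v * ζ ^ (ε * v.choose 2) * (R.coeff v) ^ r * σ ^ (r * A))
        * ((-1 : ℂ) ^ u * (A.choose u : ℂ) ^ r) := by
    intro u hu v hv
    rw [Finset.mem_range] at hu hv
    have huA : u ≤ A := by omega
    have hkd : u * d + v < (A + 1) * d := by
      have h2 : u * d ≤ A * d := Nat.mul_le_mul_right d huA
      calc u * d + v < u * d + d := by omega
        _ ≤ A * d + d := by omega
        _ = (A + 1) * d := by ring
    have hdiv : (u * d + v) / d = u := by
      rw [mul_comm u d, Nat.mul_add_div hd]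
      simp [Nat.div_eq_of_lt hv]
    have hmod : (u * d + v) % d = v := by
      rw [Nat.mul_add_mod', Nat.mod_eq_of_lt hv]
    rw [hco _ hkd, hdiv, hmod]
    have hsplit2 : ζ ^ (ε * (u * d + v).choose 2)
        = ζ ^ (ε * (u * d).choose 2) * ζ ^ (ε * v.choose 2) := by
      rw [choose_two_add]
      have h1 : ε * ((u * d).choose 2 + v.choose 2 + u * d * v)
          = (ε * (u * d).choose 2 + ε * v.choose 2) + d * (ε * (u * v)) := by ring
      rw [h1, pow_add, pow_add]
      have h2 : ζ ^ (d * (ε * (u * v))) = 1 := by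
        rw [pow_mul, hζ.pow_eq_one, one_pow]
      rw [h2, mul_one]
    rw [pow_add ((-1 : ℂ)) (u * d) v, hsplit2, mul_pow, mul_pow, ← pow_mul]
    have h3 : (A - u) * r = r * (A - u) := by ring
    rw [h3]
    have hph := hphase u huA
    linear_combination ((-1 : ℂ) ^ v * ζ ^ (ε * v.choose 2) * ((A.choose u : ℂ)) ^ r
      * (R.coeff v) ^ r) * hph
  rw [Finset.sum_congr rfl (fun u hu => Finset.sum_congr rfl (fun v hv => hkey u hu v hv))]
  have hfact : ∀ u ∈ range (A + 1),
      (∑ v ∈ range d, ((-1 : ℂ) ^ v * ζ ^ (ε * v.choose 2) * (R.coeff v) ^ r * σ ^ (r * A))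
        * ((-1 : ℂ) ^ u * (A.choose u : ℂ) ^ r))
      = (∑ v ∈ range d, (-1 : ℂ) ^ v * ζ ^ (ε * v.choose 2) * (R.coeff v) ^ r * σ ^ (r * A))
        * ((-1 : ℂ) ^ u * (A.choose u : ℂ) ^ r) := by
    intro u _
    rw [Finset.sum_mul]
  rw [Finset.sum_congr rfl hfact, ← Finset.mul_sum]
  rw [alt_sum_choose_pow hodd, mul_zero]

lemma two_mul_div_eq (n d : ℕ) (hd : 0 < d) :
    2 * n / d = n / d + n / d + (if Odd (2 * n / d) then 1 else 0) := by
  have h1 := Nat.div_add_mod n d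
  have h5 : n % d < d := Nat.mod_lt _ hd
  have h1b : d * (2 * (n / d)) = 2 * (d * (n / d)) := by ring
  have h2 : 2 * n = d * (2 * (n / d)) + 2 * (n % d) := by omega
  have h3 : 2 * n / d = 2 * (n / d) + 2 * (n % d) / d := by
    rw [h2, Nat.mul_add_div hd]
  have h4 : 2 * (n % d) / d = 0 ∨ 2 * (n % d) / d = 1 := by
    rcases Nat.lt_or_ge (2 * (n % d)) d with h6 | h6
    · left; exact Nat.div_eq_of_lt h6
    · right
      have h7 : 1 * d ≤ 2 * (n % d) := by omega
      have h8 : 2 * (n % d) < (1 + 1) * d := by omega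
      exact Nat.div_eq_of_lt_le h7 h8
  rcases h4 with h4 | h4
  · have hodd : ¬ Odd (2 * n / d) := by
      rw [h3, h4]
      simp [Nat.odd_iff]
    rw [if_neg hodd, h3, h4]
    omega
  · have hodd : Odd (2 * n / d) := by
      rw [h3, h4]
      simp [Nat.odd_iff]
    rw [if_pos hodd, h3, h4]
    omega

lemma prod_X_pow_sub_one_eq (N : ℕ) (s : Finset ℕ) (hs : ∀ i ∈ s, 0 < i ∧ i ≤ N) :
    ∏ i ∈ s, ((X : Polynomial ℤ) ^ i - 1)
      = ∏ d ∈ Finset.Icc 1 N, (cyclotomic d ℤ) ^ ((s.filter (fun i => d ∣ i)).card) := by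
  have h1 : ∀ i ∈ s, ((X : Polynomial ℤ) ^ i - 1)
      = ∏ d ∈ Finset.Icc 1 N, (if d ∣ i then cyclotomic d ℤ else 1) := by
    intro i hi
    rw [← prod_cyclotomic_eq_X_pow_sub_one (hs i hi).1, ← Finset.prod_filter]
    congr 1
    ext d
    simp only [Nat.mem_divisors, Finset.mem_filter, Finset.mem_Icc]
    constructor
    · rintro ⟨hdvd, hne⟩
      refine ⟨⟨?_, ?_⟩, hdvd⟩
      · rcases Nat.eq_zero_or_pos d with h0 | h0
        · exfalso
          subst h0
          rw [zero_dvd_iff] at hdvd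
          exact absurd hdvd (hs i hi).1.ne'
        · exact h0
      · exact le_trans (Nat.le_of_dvd (hs i hi).1 hdvd) (hs i hi).2
    · rintro ⟨_, hdvd⟩
      exact ⟨hdvd, (hs i hi).1.ne'⟩
  rw [Finset.prod_congr rfl h1, Finset.prod_comm]
  refine Finset.prod_congr rfl fun d _ => ?_
  rw [← Finset.prod_filter, Finset.prod_const]

lemma card_filter_dvd_Ioc (a b d : ℕ) (hab : a ≤ b) :
    ((Finset.Ioc 0 a).filter (fun i => d ∣ i)).card
      + ((Finset.Ioc a b).filter (fun i => d ∣ i)).card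
      = ((Finset.Ioc 0 b).filter (fun i => d ∣ i)).card := by
  rw [← Finset.card_union_of_disjoint
      (Finset.disjoint_filter_filter (Finset.disjoint_left.mpr
        (fun x hx1 hx2 => by
          simp only [Finset.mem_Ioc] at hx1 hx2; omega))),
    ← Finset.filter_union, Finset.Ioc_union_Ioc_eq_Ioc (Nat.zero_le a) hab]

lemma cyclo_prod_eval_one (n : ℕ) (hn : 0 < n) :
    (∏ d ∈ (Finset.Icc 1 (2*n)).filter (fun d => Odd (2*n / d)), cyclotomic d ℤ).eval 1
      = ((2*n).choose n : ℤ) := by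
  have hIoc1 : ∀ i ∈ Finset.Ioc 0 n, 0 < i ∧ i ≤ 2*n := fun i hi => by
    simp only [Finset.mem_Ioc] at hi; omega
  have hIoc2 : ∀ i ∈ Finset.Ioc n (2*n), 0 < i ∧ i ≤ 2*n := fun i hi => by
    simp only [Finset.mem_Ioc] at hi; omega
  have hA := prod_X_pow_sub_one_eq (2*n) (Finset.Ioc n (2*n)) hIoc2
  have hB := prod_X_pow_sub_one_eq (2*n) (Finset.Ioc 0 n) hIoc1
  have hexp : ∀ d ∈ Finset.Icc 1 (2*n),
      ((Finset.Ioc n (2*n)).filter (fun i => d ∣ i)).card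
        = ((Finset.Ioc 0 n).filter (fun i => d ∣ i)).card
          + (if Odd (2*n / d) then 1 else 0) := by
    intro d hd
    simp only [Finset.mem_Icc] at hd
    have hd0 : 0 < d := hd.1
    have hcard := card_filter_dvd_Ioc n (2*n) d (by omega)
    rw [Nat.Ioc_filter_dvd_card_eq_div, Nat.Ioc_filter_dvd_card_eq_div] at hcard
    rw [Nat.Ioc_filter_dvd_card_eq_div]
    have h2 := two_mul_div_eq n d hd0
    omega
  have hpoly : ∏ i ∈ Finset.Ioc n (2*n), ((X : Polynomial ℤ) ^ i - 1)
      = (∏ d ∈ (Finset.Icc 1 (2*n)).filter (fun d => Odd (2*n / d)), cyclotomic d ℤ)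
        * ∏ i ∈ Finset.Ioc 0 n, ((X : Polynomial ℤ) ^ i - 1) := by
    rw [hA, hB, Finset.prod_filter, ← Finset.prod_mul_distrib]
    refine Finset.prod_congr rfl fun d hd => ?_
    rw [hexp d hd, pow_add]
    split_ifs with h
    · rw [pow_one]; ring
    · rw [pow_zero]; ring
  have hcard1 : (Finset.Ioc n (2*n)).card = n := by rw [Nat.card_Ioc]; omega
  have hcard2 : (Finset.Ioc 0 n).card = n := by rw [Nat.card_Ioc]; omega
  have hsplitA : ∏ i ∈ Finset.Ioc n (2*n), ((X : Polynomial ℤ) ^ i - 1)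
      = (∏ i ∈ Finset.Ioc n (2*n), (∑ j ∈ range i, (X : Polynomial ℤ) ^ j))
        * ((X : Polynomial ℤ) - 1) ^ n := by
    rw [Finset.prod_congr rfl (fun i (_ : i ∈ Finset.Ioc n (2*n)) =>
      (geom_sum_mul (X : Polynomial ℤ) i).symm), Finset.prod_mul_distrib,
      Finset.prod_const, hcard1]
  have hsplitB : ∏ i ∈ Finset.Ioc 0 n, ((X : Polynomial ℤ) ^ i - 1)
      = (∏ i ∈ Finset.Ioc 0 n, (∑ j ∈ range i, (X : Polynomial ℤ) ^ j))
        * ((X : Polynomial ℤ) - 1) ^ n := by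
    rw [Finset.prod_congr rfl (fun i (_ : i ∈ Finset.Ioc 0 n) =>
      (geom_sum_mul (X : Polynomial ℤ) i).symm), Finset.prod_mul_distrib,
      Finset.prod_const, hcard2]
  have hne : ((X : Polynomial ℤ) - 1) ^ n ≠ 0 := by
    apply pow_ne_zero
    intro hcon
    have h9 := congrArg (Polynomial.eval 2) hcon
    simp at h9
  have hcancel : (∏ i ∈ Finset.Ioc n (2*n), (∑ j ∈ range i, (X : Polynomial ℤ) ^ j))
      = (∏ d ∈ (Finset.Icc 1 (2*n)).filter (fun d => Odd (2*n / d)), cyclotomic d ℤ)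
        * ∏ i ∈ Finset.Ioc 0 n, (∑ j ∈ range i, (X : Polynomial ℤ) ^ j) := by
    apply mul_right_cancel₀ hne
    rw [← hsplitA, hpoly, hsplitB]
    ring
  have heval := congrArg (Polynomial.eval 1) hcancel
  simp only [Polynomial.eval_prod, Polynomial.eval_mul, Polynomial.eval_finset_sum,
    Polynomial.eval_pow, Polynomial.eval_X, one_pow, Finset.sum_const, Finset.card_range,
    nsmul_eq_mul, mul_one] at heval
  -- now pure arithmetic
  have hIocIco : Finset.Ioc 0 n = Finset.Ico 1 (n+1) := by
    ext x; simp only [Finset.mem_Ioc, Finset.mem_Ico]; omega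
  have hIocIco2 : Finset.Ioc 0 (2*n) = Finset.Ico 1 (2*n+1) := by
    ext x; simp only [Finset.mem_Ioc, Finset.mem_Ico]; omega
  have hfac1 : (∏ i ∈ Finset.Ioc 0 n, i) = Nat.factorial n := by
    rw [hIocIco]; exact Finset.prod_Ico_id_eq_factorial n
  have hfacN : (∏ i ∈ Finset.Ioc 0 (2*n), i) = Nat.factorial (2*n) := by
    rw [hIocIco2]; exact Finset.prod_Ico_id_eq_factorial (2*n)
  have hsplitF : (∏ i ∈ Finset.Ioc 0 n, i) * (∏ i ∈ Finset.Ioc n (2*n), i) = Nat.factorial (2*n) := by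
    rw [Finset.prod_Ioc_consecutive _ (Nat.zero_le n) (by omega : n ≤ 2*n), hfacN]
  have hchoose : (2*n).choose n * Nat.factorial n * Nat.factorial n = Nat.factorial (2*n) := by
    have h10 := Nat.choose_mul_factorial_mul_factorial (by omega : n ≤ 2*n)
    have h11 : 2*n - n = n := by omega
    rw [h11] at h10
    exact h10
  have hNat : ∏ i ∈ Finset.Ioc n (2*n), i = (2*n).choose n * Nat.factorial n := by
    apply Nat.eq_of_mul_eq_mul_left (Nat.factorial_pos n)
    calc Nat.factorial n * ∏ i ∈ Finset.Ioc n (2*n), i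
        = (∏ i ∈ Finset.Ioc 0 n, i) * ∏ i ∈ Finset.Ioc n (2*n), i := by rw [hfac1]
      _ = Nat.factorial (2*n) := hsplitF
      _ = (2*n).choose n * Nat.factorial n * Nat.factorial n := hchoose.symm
      _ = Nat.factorial n * ((2*n).choose n * Nat.factorial n) := by ring
  have hcast1 : ∏ i ∈ Finset.Ioc n (2*n), (i : ℤ) = (((2*n).choose n : ℕ) : ℤ) * (Nat.factorial n : ℤ) := by
    rw [← Nat.cast_prod, hNat]
    push_cast
    ring
  have hcast2 : ∏ i ∈ Finset.Ioc 0 n, (i : ℤ) = ((Nat.factorial n : ℕ) : ℤ) := by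
    rw [← Nat.cast_prod, hfac1]
  rw [hcast1, hcast2] at heval
  have hfne : ((Nat.factorial n : ℕ) : ℤ) ≠ 0 := by
    exact_mod_cast (Nat.factorial_pos n).ne'
  rw [Polynomial.eval_prod]
  apply mul_right_cancel₀ hfne
  rw [← heval]

end CalkinAux

open Finset CalkinAux Polynomial in
theorem stmt2 (n r : ℕ) (hn : 0 < n) (hr : 0 < r) :
    (((2 * n).choose n : ℤ)) ∣
      ∑ k ∈ Finset.range (2 * n + 1), (-1 : ℤ) ^ k * ((2 * n).choose k : ℤ) ^ r := by
  classical
  obtain ⟨ε, hε⟩ : ∃ e : ℕ, e = if Even r then 1 else 0 := ⟨_, rfl⟩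
  have hpar : Odd (r + ε) := by
    rcases Nat.even_or_odd r with h | h
    · rw [hε, if_pos h]
      exact h.add_one
    · rw [hε, if_neg (Nat.not_even_iff_odd.mpr h)]
      simpa using h
  have hMmonic : (∏ d ∈ (Finset.Icc 1 (2*n)).filter (fun d => Odd (2*n / d)),
      cyclotomic d ℤ).Monic :=
    Polynomial.monic_prod_of_monic _ _ (fun d _ => cyclotomic.monic d ℤ)
  have hdvdQ : ∀ d ∈ (Finset.Icc 1 (2*n)).filter (fun d => Odd (2*n / d)),
      cyclotomic d ℚ ∣ (Bq (2*n) r ε).map (Int.castRingHom ℚ) := by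
    intro d hd
    rw [Finset.mem_filter, Finset.mem_Icc] at hd
    have hd0 : 0 < d := hd.1.1
    have hζ := Complex.isPrimitiveRoot_exp d (by omega)
    rw [Polynomial.cyclotomic_eq_minpoly_rat hζ hd0]
    apply minpoly.dvd
    have h0 := Bq_aeval_eq_zero hr hd0 hd.2 hpar hζ
    rwa [show Int.castRingHom ℚ = algebraMap ℤ ℚ from rfl, Polynomial.aeval_map_algebraMap]
  have hcop : (↑((Finset.Icc 1 (2*n)).filter (fun d => Odd (2*n / d))) : Set ℕ).Pairwise
      (Function.onFun IsCoprime (fun d => cyclotomic d ℚ)) := by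
    intro a _ b _ hne
    exact Polynomial.cyclotomic.isCoprime_rat hne
  have hMQdvd : (∏ d ∈ (Finset.Icc 1 (2*n)).filter (fun d => Odd (2*n / d)),
      cyclotomic d ℤ).map (Int.castRingHom ℚ) ∣ (Bq (2*n) r ε).map (Int.castRingHom ℚ) := by
    rw [Polynomial.map_prod,
      Finset.prod_congr rfl (fun d (_ : d ∈ (Finset.Icc 1 (2*n)).filter
        (fun d => Odd (2*n / d))) => map_cyclotomic_int d ℚ)]
    exact Finset.prod_dvd_of_coprime hcop hdvdQ
  have hMdvd : (∏ d ∈ (Finset.Icc 1 (2*n)).filter (fun d => Odd (2*n / d)), cyclotomic d ℤ)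
      ∣ Bq (2*n) r ε :=
    (Polynomial.map_dvd_map (Int.castRingHom ℚ) Int.cast_injective hMmonic).mp hMQdvd
  have hdvd1 := Polynomial.eval_dvd (x := (1 : ℤ)) hMdvd
  rw [Bq_eval_one, cyclo_prod_eval_one n hn] at hdvd1
  exact hdvd1
end

section
/- For integers n ≥ k ≥ 0, the Gaussian binomial coefficient [n choose k]_q, as a polynomial in q over ℤ, factors as the product of the cyclotomic polynomials Φ_d(q) over all d in the set D_{n,k} = {d ∈ ℕ, d ≥ 1 : ⌊n/d⌋ > ⌊k/d⌋ + ⌊(n-k)/d⌋}. -/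
open Finset Polynomial

/-- The Gaussian (q-)binomial coefficient as a polynomial in `ℤ[q]`,
defined by the q-Pascal recurrence. -/
noncomputable def qbinom : ℕ → ℕ → Polynomial ℤ
  | _, 0 => 1
  | 0, _ + 1 => 0
  | n + 1, k + 1 => qbinom n k + X ^ (k + 1) * qbinom n (k + 1)

noncomputable def Gpoly (m : ℕ) : Polynomial ℤ := ∏ j ∈ Finset.Icc 1 m, (X ^ j - 1)

lemma Gpoly_succ (m : ℕ) : Gpoly (m + 1) = Gpoly m * (X ^ (m + 1) - 1) := by
  simpa [Gpoly] using Finset.prod_Icc_succ_top (by omega : 1 ≤ m + 1)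
    (fun j => (X : Polynomial ℤ) ^ j - 1)

lemma Gpoly_ne_zero (m : ℕ) : Gpoly m ≠ 0 := by
  refine Finset.prod_ne_zero_iff.2 fun j hj => ?_
  intro h
  have := congrArg (Polynomial.eval 0) h
  simp [Finset.mem_Icc] at hj
  simp [zero_pow (by omega : j ≠ 0)] at this

lemma qbinom_zero_of_lt : ∀ n k : ℕ, n < k → qbinom n k = 0
  | 0, k + 1, _ => rfl
  | n + 1, k + 1, h => by
    rw [qbinom, qbinom_zero_of_lt n k (by omega), qbinom_zero_of_lt n (k + 1) (by omega)]
    ring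

lemma qbinom_self : ∀ n : ℕ, qbinom n n = 1
  | 0 => rfl
  | n + 1 => by
    rw [qbinom, qbinom_self n, qbinom_zero_of_lt n (n + 1) (by omega)]
    ring

lemma qbinom_mul : ∀ n k : ℕ, k ≤ n → qbinom n k * (Gpoly k * Gpoly (n - k)) = Gpoly n
  | n, 0, _ => by simp [qbinom, Gpoly]
  | 0, k + 1, h => by omega
  | n + 1, k + 1, h => by
    rcases Nat.lt_or_ge k n with hk | hk
    · -- k + 1 ≤ n
      have ih1 := qbinom_mul n k (by omega)
      have ih2 := qbinom_mul n (k + 1) (by omega)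
      have e0 : n + 1 - (k + 1) = n - k := by omega
      have e1 : Gpoly (k + 1) = Gpoly k * (X ^ (k + 1) - 1) := Gpoly_succ k
      have e2 : Gpoly (n - k) = Gpoly (n - (k + 1)) * (X ^ (n - k) - 1) := by
        rw [show n - k = (n - (k + 1)) + 1 from by omega, Gpoly_succ,
          show n - (k + 1) + 1 = n - k from by omega]
      have e3 : Gpoly (n + 1) = Gpoly n * (X ^ (n + 1) - 1) := Gpoly_succ n
      have e4 : (X : Polynomial ℤ) ^ (n + 1) = X ^ (k + 1) * X ^ (n - k) := by
        rw [← pow_add]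
        congr 1
        omega
      rw [e2] at ih1
      rw [e1] at ih2
      rw [qbinom, e0, e1, e2, e3, e4]
      linear_combination ((X : Polynomial ℤ) ^ (k + 1) - 1) * ih1 +
        (X : Polynomial ℤ) ^ (k + 1) * (X ^ (n - k) - 1) * ih2
    · -- k = n
      have hkn : k = n := by omega
      subst hkn
      simp [qbinom_self, Gpoly]

lemma Gpoly_eq_prod_cyclotomic (m : ℕ) :
    Gpoly m = ∏ d ∈ Finset.Icc 1 m, Polynomial.cyclotomic d ℤ ^ (m / d) := by
  have h1 : Gpoly m = ∏ j ∈ Finset.Icc 1 m, ∏ d ∈ j.divisors, Polynomial.cyclotomic d ℤ := by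
    refine Finset.prod_congr rfl fun j hj => ?_
    simp only [Finset.mem_Icc] at hj
    exact (Polynomial.prod_cyclotomic_eq_X_pow_sub_one (by omega) ℤ).symm
  rw [h1]
  have h2 : ∀ j ∈ Finset.Icc 1 m,
      (∏ d ∈ j.divisors, Polynomial.cyclotomic d ℤ) =
        ∏ d ∈ Finset.Icc 1 m, if d ∣ j then Polynomial.cyclotomic d ℤ else 1 := by
    intro j hj
    simp only [Finset.mem_Icc] at hj
    rw [← Finset.prod_filter]
    refine Finset.prod_congr ?_ fun _ _ => rfl
    ext d
    simp only [Nat.mem_divisors, Finset.mem_filter, Finset.mem_Icc]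
    constructor
    · rintro ⟨hd, hj0⟩
      have hd1 : 1 ≤ d := Nat.pos_of_dvd_of_pos hd (by omega)
      have hdm : d ≤ m := le_trans (Nat.le_of_dvd (by omega) hd) hj.2
      exact ⟨⟨hd1, hdm⟩, hd⟩
    · rintro ⟨_, hd⟩
      exact ⟨hd, by omega⟩
  rw [Finset.prod_congr rfl h2, Finset.prod_comm]
  refine Finset.prod_congr rfl fun d _ => ?_
  rw [← Finset.prod_filter, Finset.prod_const]
  congr 1
  rw [show Finset.Icc 1 m = Finset.Ioc 0 m from Finset.Icc_add_one_left_eq_Ioc 0 m]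
  exact Nat.Ioc_filter_dvd_card_eq_div m d

lemma prod_pow_div_extend (k n : ℕ) (h : k ≤ n) :
    (∏ d ∈ Finset.Icc 1 k, Polynomial.cyclotomic d ℤ ^ (k / d)) =
      ∏ d ∈ Finset.Icc 1 n, Polynomial.cyclotomic d ℤ ^ (k / d) := by
  refine Finset.prod_subset (Finset.Icc_subset_Icc le_rfl h) fun d hd hd' => ?_
  simp only [Finset.mem_Icc] at hd hd'
  rw [Nat.div_eq_of_lt (by omega), pow_zero]

theorem stmt8 (n k : ℕ) (hkn : k ≤ n) :
    qbinom n k =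
      ∏ d ∈ (Finset.Icc 1 n).filter (fun d => k / d + (n - k) / d < n / d),
        Polynomial.cyclotomic d ℤ := by
  have key := qbinom_mul n k hkn
  have hP : Gpoly k * Gpoly (n - k) =
      ∏ d ∈ Finset.Icc 1 n, Polynomial.cyclotomic d ℤ ^ (k / d + (n - k) / d) := by
    rw [Gpoly_eq_prod_cyclotomic, Gpoly_eq_prod_cyclotomic,
      prod_pow_div_extend k n hkn, prod_pow_div_extend (n - k) n (by omega),
      ← Finset.prod_mul_distrib]
    exact Finset.prod_congr rfl fun d _ => (pow_add _ _ _).symm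
  have hT : (∏ d ∈ (Finset.Icc 1 n).filter (fun d => k / d + (n - k) / d < n / d),
        Polynomial.cyclotomic d ℤ) *
      (∏ d ∈ Finset.Icc 1 n, Polynomial.cyclotomic d ℤ ^ (k / d + (n - k) / d)) =
      ∏ d ∈ Finset.Icc 1 n, Polynomial.cyclotomic d ℤ ^ (n / d) := by
    rw [Finset.prod_filter, ← Finset.prod_mul_distrib]
    refine Finset.prod_congr rfl fun d hd => ?_
    simp only [Finset.mem_Icc] at hd
    have hd0 : 0 < d := hd.1
    have hdiv : n / d = k / d + (n - k) / d +
        if d ≤ k % d + (n - k) % d then 1 else 0 := by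
      conv_lhs => rw [show n = k + (n - k) from by omega]
      rw [Nat.add_div hd0]
    split_ifs at hdiv ⊢ with h1 h2 h3
    · rw [hdiv, pow_succ]; ring
    · omega
    · omega
    · rw [one_mul, hdiv, Nat.add_zero]
  apply mul_right_cancel₀ (mul_ne_zero (Gpoly_ne_zero k) (Gpoly_ne_zero (n - k)))
  rw [key, Gpoly_eq_prod_cyclotomic n]
  conv_rhs => rw [hP]
  exact hT.symm
end

section
/- Let n, r, s be positive integers, t ≥ 2 an integer, and α = ν_2(n). Then in ℤ[q], ∑_{k=-n}^{n} (-1)^k q^{C(k,2)} [8n choose 4n+k]_q^r [4n choose 2n+k]_q^s [2n choose n+k]_q^t is divisible by Φ_{2^{α+1}}(q)^2 = (1 + q^{2^α})^2. -/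
open Finset Polynomial

/-- Gaussian binomial with an integer lower argument, zero when it is negative. -/
noncomputable def qbinomZ (n : ℕ) (k : ℤ) : Polynomial ℤ := if 0 ≤ k then qbinom n k.toNat else 0

lemma qbinom_zero (n : ℕ) : qbinom n 0 = 1 := by cases n <;> rfl

lemma qbinom_succ_succ (n k : ℕ) :
    qbinom (n + 1) (k + 1) = qbinom n k + X ^ (k + 1) * qbinom n (k + 1) := rfl

lemma qbinom_eq_zero_of_lt : ∀ {n k : ℕ}, n < k → qbinom n k = 0
  | 0, _ + 1, _ => rfl
  | n + 1, k + 1, h => by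
      rw [qbinom_succ_succ, qbinom_eq_zero_of_lt (by omega), qbinom_eq_zero_of_lt (by omega)]
      ring

lemma qbinom_gen (ζ : ℂ) : ∀ (n : ℕ) (x : ℂ),
    ∑ k ∈ range (n + 1), ζ ^ (k.choose 2) * (aeval ζ (qbinom n k) : ℂ) * x ^ k
      = ∏ i ∈ range n, (1 + ζ ^ i * x) := by
  intro n
  induction n with
  | zero => intro x; simp [qbinom_zero]
  | succ n ih =>
    intro x
    rw [Finset.sum_range_succ']
    set P := ∑ k ∈ range (n + 1),
        ζ ^ (k.choose 2) * (aeval ζ (qbinom n k) : ℂ) * (ζ * x) ^ k with hP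
    have key : ∑ k ∈ range (n + 1),
        ζ ^ ((k + 1).choose 2) * (aeval ζ (qbinom (n + 1) (k + 1)) : ℂ) * x ^ (k + 1)
        = x * P + (P - 1) := by
      have expand : ∀ k ∈ range (n + 1),
          ζ ^ ((k + 1).choose 2) * (aeval ζ (qbinom (n + 1) (k + 1)) : ℂ) * x ^ (k + 1)
          = x * (ζ ^ (k.choose 2) * (aeval ζ (qbinom n k) : ℂ) * (ζ * x) ^ k)
            + ζ ^ ((k + 1).choose 2) * (aeval ζ (qbinom n (k + 1)) : ℂ) * (ζ * x) ^ (k + 1) := by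
        intro k _
        rw [qbinom_succ_succ, map_add, map_mul, map_pow, aeval_X]
        have hc : (k + 1).choose 2 = k.choose 2 + k := by
          rw [Nat.choose_succ_succ, Nat.choose_one_right, Nat.add_comm]
        rw [hc]
        ring
      rw [Finset.sum_congr rfl expand, Finset.sum_add_distrib, ← Finset.mul_sum, ← hP]
      congr 1
      have h1 : ∑ k ∈ range (n + 2),
          ζ ^ (k.choose 2) * (aeval ζ (qbinom n k) : ℂ) * (ζ * x) ^ k
          = (∑ k ∈ range (n + 1),
              ζ ^ ((k + 1).choose 2) * (aeval ζ (qbinom n (k + 1)) : ℂ) * (ζ * x) ^ (k + 1)) + 1 := by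
        rw [Finset.sum_range_succ']
        simp [qbinom_zero]
      have h2 : ∑ k ∈ range (n + 2),
          ζ ^ (k.choose 2) * (aeval ζ (qbinom n k) : ℂ) * (ζ * x) ^ k = P := by
        rw [Finset.sum_range_succ, qbinom_eq_zero_of_lt (Nat.lt_succ_self n)]
        simp [hP]
      rw [h2] at h1
      rw [h1]; ring
    rw [key, Finset.prod_range_succ']
    have h3 : ∏ k ∈ range n, (1 + ζ ^ (k + 1) * x) = P := by
      rw [hP, ih (ζ * x)]
      exact Finset.prod_congr rfl fun i _ => by rw [pow_succ]; ring
    rw [h3, qbinom_zero]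
    simp only [map_one, pow_zero, mul_one, one_mul]
    norm_num
    ring

lemma nthRootsFinset_eq_image {m : ℕ} (hm : 0 < m) {ζ : ℂ} (hζ : IsPrimitiveRoot ζ m) :
    nthRootsFinset m (1 : ℂ) = (range m).image (ζ ^ ·) := by
  symm
  apply Finset.eq_of_subset_of_card_le
  · intro y hy
    simp only [Finset.mem_image, Finset.mem_range] at hy
    obtain ⟨i, _, rfl⟩ := hy
    exact (Polynomial.mem_nthRootsFinset hm (1 : ℂ)).2
      (by rw [← pow_mul, mul_comm, pow_mul, hζ.pow_eq_one, one_pow])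
  · rw [hζ.card_nthRootsFinset, Finset.card_image_of_injOn fun i hi j hj hij =>
      hζ.pow_inj (Finset.mem_range.1 hi) (Finset.mem_range.1 hj) hij, Finset.card_range]

lemma prod_range_one_add {m : ℕ} (hm : 0 < m) {ζ : ℂ} (hζ : IsPrimitiveRoot ζ m) (x : ℂ) :
    ∏ i ∈ range m, (1 + ζ ^ i * x) = 1 - (-1 : ℂ) ^ m * x ^ m := by
  have h1 : (1 : ℂ) ^ m - (-x) ^ m = ∏ μ ∈ nthRootsFinset m (1 : ℂ), (1 - μ * (-x)) :=
    hζ.pow_sub_pow_eq_prod_sub_mul 1 (-x) hm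
  rw [nthRootsFinset_eq_image hm hζ, Finset.prod_image (fun i hi j hj hij =>
      hζ.pow_inj (Finset.mem_range.1 hi) (Finset.mem_range.1 hj) hij)] at h1
  have h2 : ∀ i ∈ range m, (1 - ζ ^ i * (-x)) = 1 + ζ ^ i * x := fun i _ => by ring
  rw [Finset.prod_congr rfl h2] at h1
  rw [← h1, one_pow, neg_pow]

lemma prod_range_mul_one_add {m : ℕ} (hm : 0 < m) {ζ : ℂ} (hζ : IsPrimitiveRoot ζ m)
    (Q : ℕ) (x : ℂ) :
    ∏ i ∈ range (m * Q), (1 + ζ ^ i * x) = (1 - (-1 : ℂ) ^ m * x ^ m) ^ Q := by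
  induction Q with
  | zero => simp
  | succ Q ih =>
    rw [Nat.mul_succ, Finset.prod_range_add, ih, pow_succ]
    congr 1
    rw [← prod_range_one_add hm hζ x]
    refine Finset.prod_congr rfl fun i _ => ?_
    congr 1
    rw [pow_add, pow_mul, hζ.pow_eq_one, one_pow, one_mul]

lemma aeval_qbinom_eq_zero {m : ℕ} (hm : 0 < m) {ζ : ℂ} (hζ : IsPrimitiveRoot ζ m)
    {N j : ℕ} (hN : m ∣ N) (hj : ¬ m ∣ j) : (aeval ζ (qbinom N j) : ℂ) = 0 := by
  rcases lt_or_ge N j with h | hjN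
  · rw [qbinom_eq_zero_of_lt h, map_zero]
  obtain ⟨Q, rfl⟩ := hN
  set Pp : Polynomial ℂ := ∑ k ∈ range (m * Q + 1),
    C (ζ ^ (k.choose 2) * (aeval ζ (qbinom (m * Q) k) : ℂ)) * X ^ k with hPp
  set Qq : Polynomial ℂ := expand ℂ m ((1 - C ((-1 : ℂ) ^ m) * X) ^ Q) with hQq
  have hfun : Pp = Qq := by
    apply Polynomial.funext
    intro x
    rw [hPp, hQq]
    rw [Polynomial.eval_finset_sum]
    simp only [eval_mul, eval_C, eval_pow, eval_X]
    rw [qbinom_gen ζ (m * Q) x, prod_range_mul_one_add hm hζ Q x, expand_eval]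
    simp
  have hco := congrArg (fun p => Polynomial.coeff p j) hfun
  simp only [hPp, hQq] at hco
  rw [Polynomial.finset_sum_coeff] at hco
  simp only [Polynomial.coeff_C_mul, Polynomial.coeff_X_pow, mul_ite, mul_one, mul_zero] at hco
  rw [Finset.sum_ite_eq (range (m * Q + 1)) j] at hco
  rw [if_pos (Finset.mem_range.2 (Nat.lt_succ_of_le hjN))] at hco
  rw [Polynomial.coeff_expand hm, if_neg hj] at hco
  rcases mul_eq_zero.1 hco with h | h
  · exact absurd h (pow_ne_zero _ (hζ.ne_zero hm.ne'))
  · exact h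

lemma cyclotomic_dvd_qbinom {m N j : ℕ} (hm : 0 < m) (hN : m ∣ N) (hj : ¬ m ∣ j) :
    cyclotomic m ℤ ∣ qbinom N j := by
  have hζ := Complex.isPrimitiveRoot_exp m hm.ne'
  rw [cyclotomic_eq_minpoly hζ hm]
  exact minpoly.isIntegrallyClosed_dvd (hζ.isIntegral hm)
    (aeval_qbinom_eq_zero hm hζ hN hj)

theorem stmt17 (n r s t : ℕ) (hn : 0 < n) (hr : 0 < r) (hs : 0 < s) (ht : 2 ≤ t) :
    Polynomial.cyclotomic (2 ^ (padicValNat 2 n + 1)) ℤ ^ 2 ∣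
      ∑ k ∈ Finset.Icc (-(n : ℤ)) (n : ℤ),
        Polynomial.C (k.negOnePow : ℤ) * X ^ (k * (k - 1) / 2).toNat *
          qbinomZ (8 * n) (4 * (n : ℤ) + k) ^ r *
          qbinomZ (4 * n) (2 * (n : ℤ) + k) ^ s *
          qbinomZ (2 * n) ((n : ℤ) + k) ^ t := by
  haveI : Fact (Nat.Prime 2) := ⟨Nat.prime_two⟩
  set m := 2 ^ (padicValNat 2 n + 1) with hm
  have hm0 : 0 < m := Nat.pow_pos (by norm_num)
  have hdn : 2 ^ (padicValNat 2 n) ∣ n := pow_padicValNat_dvd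
  have hm2n : m ∣ 2 * n := by rw [hm, pow_succ']; exact mul_dvd_mul_left 2 hdn
  have hm4n : m ∣ 4 * n := hm2n.trans ⟨2, by ring⟩
  have hm8n : m ∣ 8 * n := hm2n.trans ⟨4, by ring⟩
  have hmn : ¬ m ∣ n := pow_succ_padicValNat_not_dvd hn.ne'
  have h2nZ : (m : ℤ) ∣ 2 * (n : ℤ) := by exact_mod_cast Int.natCast_dvd_natCast.mpr hm2n
  apply Finset.dvd_sum
  intro k hk
  rw [Finset.mem_Icc] at hk
  have h1 : (0 : ℤ) ≤ (n : ℤ) + k := by omega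
  have h2 : (0 : ℤ) ≤ 2 * (n : ℤ) + k := by omega
  have h3 : (0 : ℤ) ≤ 4 * (n : ℤ) + k := by omega
  rw [qbinomZ, if_pos h3, qbinomZ, if_pos h2, qbinomZ, if_pos h1]
  by_cases hcase : (m : ℤ) ∣ ((n : ℤ) + k)
  · -- Φ divides the first two binomials
    have hA : ¬ (m : ℤ) ∣ (4 * (n : ℤ) + k) := by
      intro hd
      have hsub := (hd.sub hcase).sub h2nZ
      rw [show (4 * (n : ℤ) + k - ((n : ℤ) + k) - 2 * (n : ℤ)) = (n : ℤ) by ring] at hsub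
      exact hmn (Int.natCast_dvd_natCast.mp hsub)
    have hB : ¬ (m : ℤ) ∣ (2 * (n : ℤ) + k) := by
      intro hd
      have hsub := hd.sub hcase
      rw [show (2 * (n : ℤ) + k - ((n : ℤ) + k)) = (n : ℤ) by ring] at hsub
      exact hmn (Int.natCast_dvd_natCast.mp hsub)
    have hnA : ¬ m ∣ (4 * (n : ℤ) + k).toNat := by
      intro hd
      apply hA
      rw [← Int.toNat_of_nonneg h3]
      exact_mod_cast Int.natCast_dvd_natCast.mpr hd
    have hnB : ¬ m ∣ (2 * (n : ℤ) + k).toNat := by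
      intro hd
      apply hB
      rw [← Int.toNat_of_nonneg h2]
      exact_mod_cast Int.natCast_dvd_natCast.mpr hd
    have hΦA := cyclotomic_dvd_qbinom hm0 hm8n hnA
    have hΦB := cyclotomic_dvd_qbinom hm0 hm4n hnB
    have hAB : cyclotomic m ℤ ^ 2 ∣
        qbinom (8 * n) (4 * (n : ℤ) + k).toNat ^ r *
          qbinom (4 * n) (2 * (n : ℤ) + k).toNat ^ s := by
      rw [sq]
      exact mul_dvd_mul (dvd_pow hΦA hr.ne') (dvd_pow hΦB hs.ne')
    rw [show Polynomial.C ((k.negOnePow : ℤ)) * X ^ (k * (k - 1) / 2).toNat *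
          qbinom (8 * n) (4 * (n : ℤ) + k).toNat ^ r *
          qbinom (4 * n) (2 * (n : ℤ) + k).toNat ^ s *
          qbinom (2 * n) ((n : ℤ) + k).toNat ^ t
        = (Polynomial.C ((k.negOnePow : ℤ)) * X ^ (k * (k - 1) / 2).toNat *
            qbinom (2 * n) ((n : ℤ) + k).toNat ^ t) *
          (qbinom (8 * n) (4 * (n : ℤ) + k).toNat ^ r *
            qbinom (4 * n) (2 * (n : ℤ) + k).toNat ^ s) by ring]
    exact hAB.mul_left _
  · have hnD : ¬ m ∣ ((n : ℤ) + k).toNat := by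
      intro hd
      apply hcase
      rw [← Int.toNat_of_nonneg h1]
      exact_mod_cast Int.natCast_dvd_natCast.mpr hd
    have hΦD := cyclotomic_dvd_qbinom hm0 hm2n hnD
    have hD : cyclotomic m ℤ ^ 2 ∣ qbinom (2 * n) ((n : ℤ) + k).toNat ^ t :=
      (pow_dvd_pow_of_dvd hΦD 2).trans (pow_dvd_pow _ ht)
    exact hD.mul_left _
end
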